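/- Let z ∈ ℝ with z > 1, let m ∈ ℕ with m ≥ 2, and let s ∈ ℂ with Re s > 0. Then Σ_{k=1}^{m−1} z^k/k^s = −z^m Σ_{n=0}^∞ ( c_n(z) − z^{1−m} p_n(z,m) ) (s)_n / m^{n+s}, where the series over n converges, p_n(z,m) := Σ_{k=0}^n c_{n−k}(z) (m−1)^k / k!, k^s = exp(s log k), and m^{n+s} = m^n exp(s log m). -/

import Mathlib

open scoped BigOperators

/-- The `n`-th Maclaurin (Taylor at `0`) coefficient of `g`. -/
noncomputable def taylorCoeff (g : ℂ → ℂ) (n : ℕ) : ℂ :=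
  iteratedDeriv n g 0 / (n.factorial : ℂ)

/-- `c_n(z)`: the `n`-th Maclaurin coefficient of `x ↦ 1/(1 - z e^{-x})`. -/
noncomputable def cCoeff (z : ℂ) (n : ℕ) : ℂ :=
  taylorCoeff (fun x => 1 / (1 - z * Complex.exp (-x))) n

/-- `p_n(z,a) = ∑_{k=0}^n c_{n-k}(z) (a-1)^k / k!`. -/
noncomputable def pPoly (z a : ℂ) (n : ℕ) : ℂ :=
  ∑ k ∈ Finset.range (n + 1), cCoeff z (n - k) * (a - 1) ^ k / (k.factorial : ℂ)

/-! With `u = eˣ / z` the generating function is `1 / (1 - z e⁻ˣ) = u / (u - 1)`, and the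
`p_n(z, m)` are the Taylor coefficients of `e^{(m-1)x} / (1 - z e⁻ˣ)`. Hence the
`c_n(z) - z^{1-m} p_n(z, m)` are the Taylor coefficients of the finite sum
`(1 - u^{m-1}) u / (u - 1) = -∑_{k=1}^{m-1} z⁻ᵏ e^{kx}`, that is `-∑_{k=1}^{m-1} z⁻ᵏ kⁿ / n!`.
The series over `n` thus splits into `m - 1` binomial series
`∑ₙ (s)ₙ (k/m)ⁿ / n! = (1 - k/m)^{-s}`, and reflecting `k ↦ m - k` gives the finite sum. -/

open Complex Filter Topology

theorem Ring.choose_add_sub_one_eq_ascPochhammer_div_factorial (s : ℂ) (n : ℕ) :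
    Ring.choose (s + n - 1) n = (ascPochhammer ℂ n).eval s / n.factorial := by
  rw [← Ring.multichoose_eq, eq_div_iff (by simp [Nat.factorial_ne_zero]), mul_comm,
    ← nsmul_eq_mul, Ring.factorial_nsmul_multichoose_eq_ascPochhammer,
    Polynomial.ascPochhammer_smeval_eq_eval]

theorem hasSum_ascPochhammer_mul_pow_div_factorial (s : ℂ) {t : ℂ} (ht : ‖t‖ < 1) :
    HasSum (fun n : ℕ => (ascPochhammer ℂ n).eval s * t ^ n / n.factorial)
      (1 / (1 - t) ^ s) := by
  have ht' : t ∈ Metric.eball (0 : ℂ) 1 := by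
    rw [Metric.mem_eball, edist_zero_right, ← ofReal_norm]
    exact ENNReal.ofReal_lt_one.mpr ht
  have h := (one_div_one_sub_cpow_hasFPowerSeriesOnBall_zero s).hasSum ht'
  simp only [FormalMultilinearSeries.ofScalars_apply_eq, zero_add, smul_eq_mul,
    Ring.choose_add_sub_one_eq_ascPochhammer_div_factorial] at h
  exact h.congr_fun fun n => by ring

theorem hasSum_ascPochhammer_mul_pow_div (s : ℂ) {a b : ℝ} (hba : |b| < a) :
    HasSum (fun n : ℕ => (ascPochhammer ℂ n).eval s * (b : ℂ) ^ n /
      (n.factorial * ((a : ℂ) ^ n * (a : ℂ) ^ s))) (1 / ((a : ℂ) - b) ^ s) := by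
  have ha : 0 < a := (abs_nonneg b).trans_lt hba
  have ha' : (a : ℂ) ≠ 0 := by exact_mod_cast ha.ne'
  have hnorm : ‖((b / a : ℝ) : ℂ)‖ < 1 := by
    rwa [norm_real, Real.norm_eq_abs, abs_div, abs_of_pos ha, div_lt_one ha]
  have hsplit : ((a : ℂ) - b) ^ s = (1 - ((b / a : ℝ) : ℂ)) ^ s * (a : ℂ) ^ s := by
    have hpos : 0 ≤ 1 - b / a := by
      rw [sub_nonneg, div_le_one ha]; exact (le_abs_self b).trans hba.le
    have : (a : ℂ) - b = ((a * (1 - b / a) : ℝ) : ℂ) := by push_cast; field_simp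
    rw [this, ofReal_mul, mul_cpow_ofReal_nonneg ha.le hpos]
    push_cast; ring
  have h := (hasSum_ascPochhammer_mul_pow_div_factorial s hnorm).div_const ((a : ℂ) ^ s)
  rw [div_div, ← hsplit] at h
  refine h.congr_fun fun n => ?_
  push_cast
  rw [div_pow]
  field_simp

section TaylorCoeff

variable {f g : ℂ → ℂ} {n : ℕ}

theorem Filter.EventuallyEq.taylorCoeff_eq (h : f =ᶠ[𝓝 0] g) :
    taylorCoeff f n = taylorCoeff g n := by
  rw [taylorCoeff, taylorCoeff, h.iteratedDeriv_eq]

theorem taylorCoeff_sub (hf : ContDiffAt ℂ n f 0) (hg : ContDiffAt ℂ n g 0) :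
    taylorCoeff (fun x => f x - g x) n = taylorCoeff f n - taylorCoeff g n := by
  rw [taylorCoeff, iteratedDeriv_fun_sub hf hg, sub_div, taylorCoeff, taylorCoeff]

theorem taylorCoeff_const_mul (c : ℂ) :
    taylorCoeff (fun x => c * f x) n = c * taylorCoeff f n := by
  rw [taylorCoeff, iteratedDeriv_const_mul_field, mul_div_assoc, taylorCoeff]

theorem taylorCoeff_neg :
    taylorCoeff (fun x => -f x) n = -taylorCoeff f n := by
  rw [taylorCoeff, iteratedDeriv_fun_neg, neg_div, taylorCoeff]

theorem taylorCoeff_sum {ι : Type*} {s : Finset ι} {f : ι → ℂ → ℂ}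
    (hf : ∀ i ∈ s, ContDiffAt ℂ n (f i) 0) :
    taylorCoeff (fun x => ∑ i ∈ s, f i x) n = ∑ i ∈ s, taylorCoeff (f i) n := by
  rw [taylorCoeff, iteratedDeriv_fun_sum hf, Finset.sum_div]
  rfl

theorem taylorCoeff_mul (hf : ContDiffAt ℂ n f 0) (hg : ContDiffAt ℂ n g 0) :
    taylorCoeff (fun x => f x * g x) n =
      ∑ i ∈ Finset.range (n + 1), taylorCoeff f i * taylorCoeff g (n - i) := by
  rw [taylorCoeff, iteratedDeriv_fun_mul hf hg, Finset.sum_div]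
  refine Finset.sum_congr rfl fun i hi => ?_
  have hin : i ≤ n := Finset.mem_range_succ_iff.mp hi
  have hfac : (n.choose i : ℂ) * i.factorial * (n - i).factorial = n.factorial := by
    exact_mod_cast Nat.choose_mul_factorial_mul_factorial hin
  have hchoose : (n.choose i : ℂ) ≠ 0 := by exact_mod_cast (Nat.choose_pos hin).ne'
  rw [taylorCoeff, taylorCoeff, ← hfac]
  field_simp

theorem taylorCoeff_cexp_const_mul (a : ℂ) (n : ℕ) :
    taylorCoeff (fun x => Complex.exp (a * x)) n = a ^ n / n.factorial := by
  simp [taylorCoeff]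

end TaylorCoeff

section GeneratingFunction

variable {z : ℂ}

theorem analyticAt_one_div_one_sub_mul_exp_neg (hz : z ≠ 1) :
    AnalyticAt ℂ (fun x => 1 / (1 - z * Complex.exp (-x))) 0 := by
  refine analyticAt_const.div (by fun_prop) ?_
  simpa [sub_eq_zero] using hz.symm

theorem pPoly_eq_taylorCoeff (hz : z ≠ 1) (a : ℂ) (n : ℕ) :
    pPoly z a n = taylorCoeff
      (fun x => Complex.exp ((a - 1) * x) * (1 / (1 - z * Complex.exp (-x)))) n := by
  rw [taylorCoeff_mul (by fun_prop) (analyticAt_one_div_one_sub_mul_exp_neg hz).contDiffAt, pPoly]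
  refine Finset.sum_congr rfl fun k _ => ?_
  rw [taylorCoeff_cexp_const_mul, cCoeff]
  ring

theorem one_sub_pow_div_one_sub_inv {u : ℂ} (hu0 : u ≠ 0) (hu1 : u ≠ 1) (N : ℕ) :
    (1 - u ^ N) / (1 - u⁻¹) = -∑ k ∈ Finset.Icc 1 N, u ^ k := by
  have h : 1 - u⁻¹ ≠ 0 := sub_ne_zero.mpr (inv_ne_one.mpr hu1).symm
  induction N with
  | zero => simp
  | succ N ih =>
    rw [Finset.sum_Icc_succ_top (by omega), neg_add, ← ih]
    field_simp
    ring

theorem one_div_one_sub_mul_exp_neg_sub (hz : z ≠ 0) {x : ℂ} (hx : z * Complex.exp (-x) ≠ 1)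
    (N : ℕ) :
    1 / (1 - z * Complex.exp (-x)) -
        (z ^ N)⁻¹ * (Complex.exp (N * x) * (1 / (1 - z * Complex.exp (-x))))
      = -∑ k ∈ Finset.Icc 1 N, (z ^ k)⁻¹ * Complex.exp (k * x) := by
  have hu : z * Complex.exp (-x) = (z⁻¹ * Complex.exp x)⁻¹ := by
    rw [mul_inv, inv_inv, Complex.exp_neg]
  have hpow (k : ℕ) : (z ^ k)⁻¹ * Complex.exp (k * x) = (z⁻¹ * Complex.exp x) ^ k := by
    rw [Complex.exp_nat_mul, mul_pow, inv_pow]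
  rw [← mul_assoc]
  simp only [hpow, hu] at hx ⊢
  rw [← one_sub_pow_div_one_sub_inv (by simp [hz]) (by rintro h; simp [h] at hx)]
  ring


theorem cCoeff_sub_cpow_mul_pPoly (hz0 : z ≠ 0) (hz1 : z ≠ 1) {m : ℕ} (hm : 1 ≤ m)
    (n : ℕ) :
    cCoeff z n - z ^ ((1 : ℂ) - m) * pPoly z m n
      = -∑ k ∈ Finset.Icc 1 (m - 1), (z ^ k)⁻¹ * (k : ℂ) ^ n / n.factorial := by
  obtain ⟨N, rfl⟩ : ∃ N, m = N + 1 := ⟨m - 1, by omega⟩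
  have hcpow : z ^ ((1 : ℂ) - (N + 1 : ℕ)) = (z ^ N)⁻¹ := by
    rw [Nat.cast_succ, show (1 : ℂ) - (N + 1) = -N by ring, Complex.cpow_neg,
      Complex.cpow_natCast]
  have hgen := (analyticAt_one_div_one_sub_mul_exp_neg hz1).contDiffAt (n := n)
  have hnear : ∀ᶠ x in 𝓝 (0 : ℂ), z * Complex.exp (-x) ≠ 1 :=
    ContinuousAt.eventually_ne (by fun_prop) (by simpa using hz1)
  rw [hcpow, pPoly_eq_taylorCoeff hz1, Nat.cast_succ, add_sub_cancel_right, cCoeff,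
    ← taylorCoeff_const_mul, ← taylorCoeff_sub hgen (by fun_prop),
    Filter.EventuallyEq.taylorCoeff_eq
      (hnear.mono fun x hx => one_div_one_sub_mul_exp_neg_sub hz0 hx N),
    taylorCoeff_neg, taylorCoeff_sum (fun _ _ => by fun_prop), Nat.add_sub_cancel]
  simp_rw [taylorCoeff_const_mul, taylorCoeff_cexp_const_mul, mul_div_assoc]

theorem hasSum_cCoeff_sub_cpow_mul_pPoly (hz0 : z ≠ 0) (hz1 : z ≠ 1) {m : ℕ} (hm : 1 ≤ m)
    (s : ℂ) :
    HasSum (fun n : ℕ => (cCoeff z n - z ^ ((1 : ℂ) - m) * pPoly z m n) *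
        (ascPochhammer ℂ n).eval s / ((m : ℂ) ^ n * (m : ℂ) ^ s))
      (-∑ k ∈ Finset.Icc 1 (m - 1), (z ^ k)⁻¹ / ((m : ℂ) - k) ^ s) := by
  have hterm : ∀ k ∈ Finset.Icc 1 (m - 1), HasSum
      (fun n : ℕ => (z ^ k)⁻¹ * ((ascPochhammer ℂ n).eval s * (k : ℂ) ^ n /
        (n.factorial * ((m : ℂ) ^ n * (m : ℂ) ^ s))))
      ((z ^ k)⁻¹ / ((m : ℂ) - k) ^ s) := fun k hk => by
    have hkm : |(k : ℝ)| < m := by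
      rw [abs_of_nonneg k.cast_nonneg]
      exact_mod_cast (by have := (Finset.mem_Icc.mp hk).2; omega : k < m)
    simpa [div_eq_mul_inv] using (hasSum_ascPochhammer_mul_pow_div s hkm).mul_left (z ^ k)⁻¹
  refine (hasSum_sum hterm).neg.congr_fun fun n => ?_
  rw [cCoeff_sub_cpow_mul_pPoly hz0 hz1 hm, neg_mul, neg_div, Finset.sum_mul, Finset.sum_div]
  congr 1
  refine Finset.sum_congr rfl fun k _ => ?_
  ring

end GeneratingFunction

theorem Finset.sum_Icc_one_sub_reflect {M : Type*} [AddCommMonoid M] (f : ℕ → M) (m : ℕ) :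
    ∑ k ∈ Finset.Icc 1 (m - 1), f (m - k) = ∑ k ∈ Finset.Icc 1 (m - 1), f k :=
  Finset.sum_nbij' (m - ·) (m - ·) (by intro k; simp; omega) (by intro k; simp; omega)
    (by intro k; simp; omega) (by intro k; simp; omega) (fun _ _ => rfl)

theorem stmt9_general (z : ℝ) (hz : 1 < z) (m : ℕ) (hm : 2 ≤ m) (s : ℂ) :
    Summable (fun n : ℕ =>
      (cCoeff (z : ℂ) n - (z : ℂ) ^ ((1 : ℂ) - (m : ℂ)) * pPoly (z : ℂ) (m : ℂ) n) *
        (ascPochhammer ℂ n).eval s / ((m : ℂ) ^ n * (m : ℂ) ^ s)) ∧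
    ∑ k ∈ Finset.Icc 1 (m - 1), (z : ℂ) ^ k / (k : ℂ) ^ s
      = -(z : ℂ) ^ m *
          ∑' n : ℕ,
            (cCoeff (z : ℂ) n - (z : ℂ) ^ ((1 : ℂ) - (m : ℂ)) * pPoly (z : ℂ) (m : ℂ) n) *
              (ascPochhammer ℂ n).eval s / ((m : ℂ) ^ n * (m : ℂ) ^ s) := by
  have hz0 : (z : ℂ) ≠ 0 := by exact_mod_cast (zero_lt_one.trans hz).ne'
  have hsum :=
    hasSum_cCoeff_sub_cpow_mul_pPoly hz0 (by exact_mod_cast hz.ne') (by omega : 1 ≤ m) s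
  refine ⟨hsum.summable, ?_⟩
  rw [hsum.tsum_eq, neg_mul_neg, Finset.mul_sum, ← Finset.sum_Icc_one_sub_reflect]
  refine Finset.sum_congr rfl fun k hk => ?_
  have hkm : k ≤ m := (Finset.mem_Icc.mp hk).2.trans (m.sub_le 1)
  rw [pow_sub₀ _ hz0 hkm, Nat.cast_sub hkm]
  ring

theorem stmt9 (z : ℝ) (hz : 1 < z) (m : ℕ) (hm : 2 ≤ m) (s : ℂ) (hs : 0 < s.re) :
    Summable (fun n : ℕ =>
      (cCoeff (z : ℂ) n - (z : ℂ) ^ ((1 : ℂ) - (m : ℂ)) * pPoly (z : ℂ) (m : ℂ) n) *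
        (ascPochhammer ℂ n).eval s / ((m : ℂ) ^ n * (m : ℂ) ^ s)) ∧
    ∑ k ∈ Finset.Icc 1 (m - 1), (z : ℂ) ^ k / (k : ℂ) ^ s
      = -(z : ℂ) ^ m *
          ∑' n : ℕ,
            (cCoeff (z : ℂ) n - (z : ℂ) ^ ((1 : ℂ) - (m : ℂ)) * pPoly (z : ℂ) (m : ℂ) n) *
              (ascPochhammer ℂ n).eval s / ((m : ℂ) ^ n * (m : ℂ) ^ s) :=
  stmt9_general z hz m hm s
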